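/- arXiv:1504.05367 — 4 statements merged into one kernel-verified Lean document; each statement's English description precedes it below -/
import Mathlib

section
/- For a 2-nilpotent matrix N whose associated oriented link pattern under the Borel classification is X, the B-invariant dim(N·V_j ∩ V_{≥i}) equals the number of arrows in X with source ≤ j and target ≥ i, where V_j = span(e₁,…,e_j) and V_{≥i} = span(e_i,…,e_n). -/
/-- Normal form: square zero, 0/1 entries, at most one nonzero entry
in each row and each column. -/
def NormalForm {n : ℕ} (N : Matrix (Fin n) (Fin n) ℂ) : Prop :=
  N ^ 2 = 0 ∧ (∀ i j, N i j = 0 ∨ N i j = 1) ∧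
    (∀ i j j', N i j ≠ 0 → N i j' ≠ 0 → j = j') ∧
    (∀ i i' j, N i j ≠ 0 → N i' j ≠ 0 → i = i')

/-- The span of the first standard basis vectors `e₁,…,e_j`. -/
noncomputable def Vle (n : ℕ) (j : Fin n) : Submodule ℂ (Fin n → ℂ) :=
  Submodule.span ℂ {v | ∃ b : Fin n, b ≤ j ∧ v = Pi.single b (1 : ℂ)}

/-- The span of the last standard basis vectors `e_i,…,e_n`. -/
noncomputable def Vge (n : ℕ) (i : Fin n) : Submodule ℂ (Fin n → ℂ) :=
  Submodule.span ℂ {v | ∃ a : Fin n, i ≤ a ∧ v = Pi.single a (1 : ℂ)}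

/-- Vectors supported on `S`. -/
noncomputable def piBot {n : ℕ} (S : Set (Fin n)) : Submodule ℂ (Fin n → ℂ) :=
  Submodule.pi Sᶜ (fun _ => (⊥ : Submodule ℂ ℂ))

lemma mem_piBot {n : ℕ} (S : Set (Fin n)) (v : Fin n → ℂ) :
    v ∈ piBot S ↔ ∀ a, a ∉ S → v a = 0 := by
  simp [piBot, Submodule.mem_pi]

lemma span_singles {n : ℕ} (S : Set (Fin n)) :
    Submodule.span ℂ {v : Fin n → ℂ | ∃ b, b ∈ S ∧ v = Pi.single b 1} = piBot S := by
  apply le_antisymm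
  · rw [Submodule.span_le]
    rintro v ⟨b, hb, rfl⟩
    rw [SetLike.mem_coe, mem_piBot]
    intro a ha
    rw [Pi.single_apply]
    split <;> simp_all
  · intro v hv
    rw [mem_piBot] at hv
    have hrep : v = ∑ a : Fin n, v a • (Pi.single a 1 : Fin n → ℂ) := by
      funext x
      simp [Finset.sum_apply, Pi.single_apply]
    rw [hrep]
    apply Submodule.sum_mem
    intro a _
    by_cases ha : a ∈ S
    · exact Submodule.smul_mem _ _ (Submodule.subset_span ⟨a, ha, rfl⟩)
    · rw [hv a ha]; simp

lemma piBot_inf {n : ℕ} (S T : Set (Fin n)) : piBot S ⊓ piBot T = piBot (S ∩ T) := by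
  ext v
  simp only [Submodule.mem_inf, mem_piBot]
  constructor
  · rintro ⟨h1, h2⟩ a ha
    by_cases hS : a ∈ S
    · exact h2 a (fun hT => ha ⟨hS, hT⟩)
    · exact h1 a hS
  · intro h
    exact ⟨fun a ha => h a (fun h' => ha h'.1), fun a ha => h a (fun h' => ha h'.2)⟩

open Classical in
/-- Linear equivalence of `piBot S` with functions on `S`. -/
noncomputable def piBotEquiv {n : ℕ} (S : Set (Fin n)) :
    (piBot S : Submodule ℂ (Fin n → ℂ)) ≃ₗ[ℂ] (S → ℂ) where
  toFun v s := v.1 s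
  map_add' _ _ := rfl
  map_smul' _ _ := rfl
  invFun f := ⟨fun a => if h : a ∈ S then f ⟨a, h⟩ else 0, by
    rw [mem_piBot]; intro a ha; simp [ha]⟩
  left_inv v := by
    apply Subtype.ext
    funext a
    by_cases h : a ∈ S
    · exact dif_pos h
    · exact (dif_neg h).trans ((mem_piBot S v.1).1 v.2 a h).symm
  right_inv f := by funext s; exact dif_pos s.2

lemma finrank_piBot {n : ℕ} (S : Set (Fin n)) :
    Module.finrank ℂ (piBot S) = S.ncard := by
  haveI := Fintype.ofFinite S
  rw [(piBotEquiv S).finrank_eq, Module.finrank_pi, ← Nat.card_coe_set_eq,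
    Nat.card_eq_fintype_card]

/-- For a matrix `N` in normal form (an oriented link pattern),
`dim (N·V_j ∩ V_{≥i})` equals the number of arrows of the pattern with
source `≤ j` and target `≥ i`. -/
theorem dim_invariant_eq_arrow_count {n : ℕ} (N : Matrix (Fin n) (Fin n) ℂ)
    (hN : NormalForm N) (i j : Fin n) :
    Module.finrank ℂ ((Vle n j).map N.mulVecLin ⊓ Vge n i : Submodule ℂ (Fin n → ℂ)) =
      Set.ncard {q : Fin n × Fin n | N q.1 q.2 ≠ 0 ∧ q.2 ≤ j ∧ i ≤ q.1} := by
  obtain ⟨-, h01, hrow, hcol⟩ := hN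
  set A : Set (Fin n) := {a | ∃ b, b ≤ j ∧ N a b ≠ 0} with hA
  -- image of Vle under N
  have hmap : (Vle n j).map N.mulVecLin = piBot A := by
    apply le_antisymm
    · rw [Vle, Submodule.map_span, Submodule.span_le]
      rintro _ ⟨_, ⟨b, hb, rfl⟩, rfl⟩
      rw [SetLike.mem_coe, mem_piBot]
      intro a ha
      have hNab : N a b = 0 := by
        by_contra h
        exact ha ⟨b, hb, h⟩
      simp [Matrix.mulVecLin_apply, Matrix.mulVec, dotProduct, Pi.single_apply, hNab]
    · rw [← span_singles A, Submodule.span_le]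
      rintro _ ⟨a, ⟨b, hbj, hab⟩, rfl⟩
      refine ⟨Pi.single b 1, Submodule.subset_span ⟨b, hbj, rfl⟩, ?_⟩
      funext a'
      have hlhs : N.mulVecLin (Pi.single b 1) a' = N a' b := by
        simp [Matrix.mulVecLin_apply, Matrix.mulVec, dotProduct, Pi.single_apply]
      rw [hlhs, Pi.single_apply]
      by_cases h : a' = a
      · subst h
        rcases h01 a' b with h0 | h1
        · exact absurd h0 hab
        · simp [h1]
      · have hz : N a' b = 0 := by
          by_contra hne
          exact h (hcol a' a b hne hab)
        simp [hz, h]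
  have hge : Vge n i = piBot {a | i ≤ a} := span_singles {a | i ≤ a}
  rw [hmap, hge, piBot_inf, finrank_piBot]
  -- count
  have hinj : Set.InjOn Prod.fst {q : Fin n × Fin n | N q.1 q.2 ≠ 0 ∧ q.2 ≤ j ∧ i ≤ q.1} := by
    rintro ⟨a, b⟩ ⟨ha, -, -⟩ ⟨a', b'⟩ ⟨ha', -, -⟩ h
    simp only at h
    subst h
    exact Prod.ext rfl (hrow a b b' ha ha')
  have himg : Prod.fst '' {q : Fin n × Fin n | N q.1 q.2 ≠ 0 ∧ q.2 ≤ j ∧ i ≤ q.1}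
      = A ∩ {a | i ≤ a} := by
    ext a
    constructor
    · rintro ⟨⟨a', b⟩, ⟨hne, hbj, hia⟩, rfl⟩
      exact ⟨⟨b, hbj, hne⟩, hia⟩
    · rintro ⟨⟨b, hbj, hne⟩, hia⟩
      exact ⟨(a, b), ⟨hne, hbj, hia⟩, rfl⟩
  rw [← himg, Set.ncard_image_of_injOn hinj]
end

section
/- Two matrices N, N' in Borel normal form (0/1 matrices with square zero and at most one nonzero entry per row and column) are equal if and only if dim(N·V_j ∩ V_{≥i}) = dim(N'·V_j ∩ V_{≥i}) for all 1 ≤ i,j ≤ n. -/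
/-! Every column of `N` is `0` or a standard basis vector `e_a`, so `N·V_j ∩ V_{≥i}` is
spanned by the `e_a` with `a ≥ i` whose row has its nonzero entry in a column `≤ j`, and its
dimension counts these rows. For fixed `j`, the counts over all `i` recover the set of rows with
a nonzero entry in a column `≤ j`; letting `j` vary then locates the unique nonzero entry (if
any) of every row. -/

open Finset Submodule
open scoped Matrix

theorem Set.Subsingleton.eq_of_forall_exists_le_iff {α : Type*} [PartialOrder α]
    {A B : Set α} (hA : A.Subsingleton) (hB : B.Subsingleton)
    (h : ∀ j, (∃ a ∈ A, a ≤ j) ↔ ∃ b ∈ B, b ≤ j) : A = B := by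
  have subset : ∀ {A B : Set α}, A.Subsingleton → (∀ j, (∃ a ∈ A, a ≤ j) ↔ ∃ b ∈ B, b ≤ j) →
      A ⊆ B := by
    intro A B hA h x hx
    obtain ⟨b, hb, hbx⟩ := (h x).1 ⟨x, hx, le_rfl⟩
    obtain ⟨a, ha, hab⟩ := (h b).2 ⟨b, hb, le_rfl⟩
    obtain rfl : a = x := hA ha hx
    rwa [le_antisymm hbx hab] at hb
  exact (subset hA h).antisymm (subset hB fun j => (h j).symm)

theorem Finset.card_filter_le_eq {α : Type*} [LinearOrder α] (s : Finset α) (a : α) :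
    #{x ∈ s | a ≤ x} = #{x ∈ s | a < x} + if a ∈ s then 1 else 0 := by
  split_ifs with ha
  · have : {x ∈ s | a ≤ x} = insert a {x ∈ s | a < x} := by
      ext x
      simp only [mem_filter, mem_insert, le_iff_eq_or_lt]
      grind
    rw [this, card_insert_of_notMem (by simp)]
  · congr 1
    exact filter_congr fun x hx => by rw [le_iff_lt_or_eq, or_iff_left (by rintro rfl; exact ha hx)]

theorem Finset.eq_of_forall_card_filter_le_eq {α : Type*} [LinearOrder α] [WellFoundedGT α]
    {s t : Finset α} (h : ∀ i, #{a ∈ s | i ≤ a} = #{a ∈ t | i ≤ a}) : s = t := by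
  ext a
  induction a using WellFoundedGT.induction with
  | _ a ih =>
  have hgt : {x ∈ s | a < x} = {x ∈ t | a < x} := by
    ext x
    simp only [mem_filter, and_congr_left_iff]
    exact ih x
  have := h a
  rw [card_filter_le_eq, card_filter_le_eq t, hgt] at this
  split_ifs at this <;> simp_all

section CoordinateSpan

variable {R ι : Type*} [Semiring R] [DecidableEq ι] [Finite ι]

theorem span_image_single_one_eq_map_supported (S : Set ι) :
    span R ((fun a => Pi.single a (1 : R)) '' S) =
      (Finsupp.supported R R S).map (Finsupp.linearEquivFunOnFinite R R ι).toLinearMap := by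
  rw [Finsupp.supported_eq_span_single, map_span, Set.image_image]
  simp [Finsupp.linearEquivFunOnFinite_single]

theorem span_image_single_one_inf (S T : Set ι) :
    span R ((fun a => Pi.single a (1 : R)) '' S) ⊓ span R ((fun a => Pi.single a (1 : R)) '' T) =
      span R ((fun a => Pi.single a (1 : R)) '' (S ∩ T)) := by
  simp only [span_image_single_one_eq_map_supported, Finsupp.supported_inter,
    ← Submodule.map_inf _ (LinearEquiv.injective _)]

theorem finrank_span_image_single_one [StrongRankCondition R] (S : Finset ι) :
    Module.finrank R (span R ((fun a => Pi.single a (1 : R)) '' (S : Set ι))) = #S := by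
  have := Fintype.ofFinite ι
  rw [span_image_single_one_eq_map_supported, LinearEquiv.finrank_map_eq,
    (Finsupp.supportedEquivFinsupp _).finrank_eq, Module.finrank_finsupp_self]
  simp

end CoordinateSpan

lemma Vle_eq_span_image (n : ℕ) (j : Fin n) :
    Vle n j = span ℂ ((fun b => Pi.single b (1 : ℂ)) '' Set.Iic j) := by
  simp only [Vle, Set.image, Set.mem_Iic, eq_comm]

lemma Vge_eq_span_image (n : ℕ) (i : Fin n) :
    Vge n i = span ℂ ((fun a => Pi.single a (1 : ℂ)) '' Set.Ici i) := by
  simp only [Vge, Set.image, Set.mem_Ici, eq_comm]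

open Classical in
noncomputable def pivotRowsUpTo {n : ℕ} (N : Matrix (Fin n) (Fin n) ℂ) (j : Fin n) :
    Finset (Fin n) :=
  {a | ∃ b ≤ j, N a b ≠ 0}

@[simp]
lemma mem_pivotRowsUpTo {n : ℕ} {N : Matrix (Fin n) (Fin n) ℂ} {j a : Fin n} :
    a ∈ pivotRowsUpTo N j ↔ ∃ b ≤ j, N a b ≠ 0 := by
  simp [pivotRowsUpTo]

namespace NormalForm

variable {n : ℕ} {N N' : Matrix (Fin n) (Fin n) ℂ}

lemma mulVec_single_one (hN : NormalForm N) {a b : Fin n} (hab : N a b ≠ 0) :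
    N *ᵥ Pi.single b 1 = Pi.single a 1 := by
  obtain ⟨-, h01, -, hcol⟩ := hN
  ext a'
  rw [Matrix.mulVec_single_one]
  by_cases h : a' = a
  · subst h
    simpa using (h01 a' b).resolve_left hab
  · rw [Pi.single_eq_of_ne h]
    by_contra h'
    exact h (hcol a' a b h' hab)

lemma map_Vle (hN : NormalForm N) (j : Fin n) :
    (Vle n j).map N.mulVecLin =
      span ℂ ((fun a => Pi.single a (1 : ℂ)) '' (pivotRowsUpTo N j : Set (Fin n))) := by
  rw [Vle_eq_span_image, map_span]
  apply le_antisymm <;> rw [span_le]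
  · rintro _ ⟨_, ⟨b, hb, rfl⟩, rfl⟩
    by_cases hcol : ∃ a, N a b ≠ 0
    · obtain ⟨a, hab⟩ := hcol
      exact subset_span ⟨a, mem_pivotRowsUpTo.2 ⟨b, hb, hab⟩, (hN.mulVec_single_one hab).symm⟩
    · push Not at hcol
      have : N *ᵥ Pi.single b 1 = 0 := by ext a; simp [hcol]
      rw [SetLike.mem_coe, Matrix.mulVecLin_apply, this]
      exact zero_mem _
  · rintro _ ⟨a, ha, rfl⟩
    obtain ⟨b, hb, hab⟩ := mem_pivotRowsUpTo.1 ha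
    exact subset_span ⟨Pi.single b 1, ⟨b, hb, rfl⟩, hN.mulVec_single_one hab⟩

lemma finrank_map_Vle_inf_Vge (hN : NormalForm N) (i j : Fin n) :
    Module.finrank ℂ ((Vle n j).map N.mulVecLin ⊓ Vge n i : Submodule ℂ (Fin n → ℂ)) =
      #{a ∈ pivotRowsUpTo N j | i ≤ a} := by
  have hrows : (pivotRowsUpTo N j : Set (Fin n)) ∩ Set.Ici i =
      ↑{a ∈ pivotRowsUpTo N j | i ≤ a} := by
    ext; simp
  rw [hN.map_Vle, Vge_eq_span_image, span_image_single_one_inf, hrows,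
    finrank_span_image_single_one]

lemma subsingleton_row_support (hN : NormalForm N) (a : Fin n) :
    {b | N a b ≠ 0}.Subsingleton :=
  fun _ hb _ hb' => hN.2.2.1 a _ _ hb hb'

lemma ext_of_ne_zero_iff (hN : NormalForm N) (hN' : NormalForm N')
    (h : ∀ a b, N a b ≠ 0 ↔ N' a b ≠ 0) : N = N' := by
  ext a b
  have := h a b
  rcases hN.2.1 a b with h0 | h1 <;> rcases hN'.2.1 a b with h0' | h1' <;> simp_all

end NormalForm

/-- Two matrices in Borel normal form coincide iff all the invariants
`dim (N·V_j ∩ V_{≥i})` agree. -/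
theorem normal_form_eq_iff_dims {n : ℕ} (N N' : Matrix (Fin n) (Fin n) ℂ)
    (hN : NormalForm N) (hN' : NormalForm N') :
    N = N' ↔ ∀ i j : Fin n,
      Module.finrank ℂ ((Vle n j).map N.mulVecLin ⊓ Vge n i : Submodule ℂ (Fin n → ℂ)) =
      Module.finrank ℂ ((Vle n j).map N'.mulVecLin ⊓ Vge n i : Submodule ℂ (Fin n → ℂ)) := by
  refine ⟨fun h _ _ => h ▸ rfl, fun h => ?_⟩
  have hpivots (j : Fin n) : pivotRowsUpTo N j = pivotRowsUpTo N' j :=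
    Finset.eq_of_forall_card_filter_le_eq fun i => by
      rw [← hN.finrank_map_Vle_inf_Vge, ← hN'.finrank_map_Vle_inf_Vge, h]
  have hrows (a : Fin n) : {b | N a b ≠ 0} = {b | N' a b ≠ 0} := by
    refine (hN.subsingleton_row_support a).eq_of_forall_exists_le_iff
      (hN'.subsingleton_row_support a) fun j => ?_
    simpa [and_comm] using congr(a ∈ $(hpivots j))
  exact hN.ext_of_ne_zero_iff hN' fun a b => Set.ext_iff.mp (hrows a) b
end

section
/- For λ ∈ ℂ*, the 4×4 matrix E(λ) with (E(λ))_{2,1} = (E(λ))_{3,1} = (E(λ))_{3,2} = (E(λ))_{4,2} = (E(λ))_{4,3} = 1 and (E(λ))_{4,1} = λ (all other entries 0) satisfies E(λ)⁴ = 0 and E(λ)³ ≠ 0, and for λ ≠ μ in ℂ*, E(λ) and E(μ) are not conjugate by any invertible upper triangular 4×4 matrix. -/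
/-- The matrix `E(λ)`. -/
def Emat (lam : ℂ) : Matrix (Fin 4) (Fin 4) ℂ :=
  !![0,0,0,0; 1,0,0,0; 1,1,0,0; lam,1,1,0]

/-- `E(λ)` is 4-nilpotent but not 3-nilpotent, and for distinct `λ, μ ∈ ℂ*`
the matrices `E(λ)` and `E(μ)` are not conjugate by any invertible upper
triangular 4×4 matrix. -/
theorem Emat_nilpotent_and_nonconjugate :
    (∀ lam : ℂ, lam ≠ 0 → (Emat lam) ^ 4 = 0 ∧ (Emat lam) ^ 3 ≠ 0) ∧
    (∀ lam mu : ℂ, lam ≠ 0 → mu ≠ 0 → lam ≠ mu →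
      ¬ ∃ g : Matrix (Fin 4) (Fin 4) ℂ, IsUnit g ∧ (∀ i j : Fin 4, j < i → g i j = 0) ∧
        g * Emat lam * g⁻¹ = Emat mu) := by
  constructor
  · intro lam _
    constructor
    · ext i j
      fin_cases i <;> fin_cases j <;>
        simp [Emat, pow_succ, Matrix.mul_apply, Fin.sum_univ_succ]
    · intro h
      have := congrFun (congrFun h 3) 0
      simp [Emat, pow_succ, Matrix.mul_apply, Fin.sum_univ_succ] at this
  · rintro lam mu hl hm hne ⟨g, hg, ht, hconj⟩
    have hdet : IsUnit g.det := (Matrix.isUnit_iff_isUnit_det g).mp hg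
    have hinv : g⁻¹ * g = 1 := Matrix.nonsing_inv_mul g hdet
    have h : g * Emat lam = Emat mu * g := by
      calc g * Emat lam = g * Emat lam * (g⁻¹ * g) := by rw [hinv, mul_one]
      _ = Emat mu * g := by rw [← mul_assoc, hconj]
    have t10 := ht 1 0 (by decide)
    have t20 := ht 2 0 (by decide)
    have t21 := ht 2 1 (by decide)
    have t30 := ht 3 0 (by decide)
    have t31 := ht 3 1 (by decide)
    have t32 := ht 3 2 (by decide)
    have e := fun i j => congrFun (congrFun h i) j
    have e02 := e 0 2; have e01 := e 0 1; have e00 := e 0 0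
    have e12 := e 1 2; have e11 := e 1 1; have e10 := e 1 0
    have e21 := e 2 1; have e22 := e 2 2
    have e30 := e 3 0; have e31 := e 3 1
    simp [Matrix.mul_apply, Fin.sum_univ_four, Emat, t10, t20, t21, t30, t31, t32,
      Matrix.vecHead, Matrix.vecTail] at e00 e01 e02 e10 e11 e12 e21 e22 e30 e31
    have hd : g 0 3 = 0 := by linear_combination e02
    have hc : g 0 2 = 0 := by linear_combination e01 - e02
    have hb : g 0 1 = 0 := by linear_combination e00 - e01 + e02 - lam * e02
    have hh : g 1 3 = 0 := by linear_combination e12 + hc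
    have hf : g 1 2 = 0 := by linear_combination e11 + hb - hh
    have hea : g 1 1 = g 0 0 := by linear_combination e10 - hf - lam * hh
    have hj : g 2 3 = 0 := by linear_combination e22 + hc + hf
    have hia : g 2 2 = g 0 0 := by linear_combination e21 - hj + hb + hea
    have hka : g 3 3 = g 0 0 := by linear_combination e31 + mu * hb + hea
    have key : lam * g 0 0 = mu * g 0 0 := by linear_combination e30 - lam * hka
    have hdet2 : g.det = g 0 0 * g 1 1 * (g 2 2 * g 3 3) := by
      rw [Matrix.det_of_upperTriangular ht, Fin.prod_univ_four]
      ring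
    have ha : g 0 0 ≠ 0 := by
      intro h0
      rw [hdet2, h0] at hdet
      simp at hdet
    exact hne (mul_right_cancel₀ ha key)
end

section
/- For the parabolic subgroup P of GLₙ(ℂ) and N a 2-nilpotent matrix corresponding via the quiver translation to the representation M = ⊕ U_{i,j}^{m_{i,j}} ⊕ ⊕ V_i^{n_i}, the dimension of the P-orbit of N equals Σ_{i=1}^{p} Σ_{x=1}^{i} b_i b_x − Σ_{i,j} m_{i,j} b_{i,j}(M) − Σ_i n_i a_i(M), where a_k(M) = dim Hom(V_k, M) and b_{k,l}(M) = dim Hom(U_{k,l}, M). -/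
/-!
Read `N` as its link pattern (`IsLinkPattern`). A matrix `A` commutes with `N` iff `A u v = 0`
when `v` is a target but `u` is not, or `u` is a source but `v` is not, and
`A u v = A (source u) (source v)` for targets `u, v`. Hence an element of the stabilizer algebra is
freely and uniquely determined by its entries at the free pairs: `(u, v)` with `u` not a source,
`v` not a target and `β u ≤ β v`, or with `u, v` targets whose arrows compare blockwise at both
ends. Block `k` has `n_k + Σ_l m_{k,l}` non-sources and `n_k + Σ_l m_{l,k}` non-targets, and
`m_{k,l}` arrows go from block `l` to block `k`, so counting free pairs gives two bilinear sums in
`(n, m)` that rearrange into `Σ m_{i,j} b_{i,j}(M) + Σ n_i a_i(M)`.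
-/

/-- The Lie algebra of the standard parabolic of block assignment `β`:
block upper triangular matrices, as a `ℂ`-submodule of the matrix space. -/
noncomputable def pAlg {n p : ℕ} (β : Fin n → Fin p) :
    Submodule ℂ (Matrix (Fin n) (Fin n) ℂ) where
  carrier := {A | ∀ i j, β j < β i → A i j = 0}
  add_mem' := by
    intro a b ha hb i j hij
    simp [Matrix.add_apply, ha i j hij, hb i j hij]
  zero_mem' := by intro i j _; rfl
  smul_mem' := by
    intro c A hA i j hij
    simp [Matrix.smul_apply, hA i j hij]

/-- The Lie algebra of the stabilizer of `N` in the parabolic: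
block upper triangular matrices commuting with `N`. -/
noncomputable def stabAlg {n p : ℕ} (β : Fin n → Fin p) (N : Matrix (Fin n) (Fin n) ℂ) :
    Submodule ℂ (Matrix (Fin n) (Fin n) ℂ) where
  carrier := {A | (∀ i j, β j < β i → A i j = 0) ∧ A * N = N * A}
  add_mem' := by
    intro a b ha hb
    refine ⟨fun i j hij => ?_, ?_⟩
    · simp [Matrix.add_apply, ha.1 i j hij, hb.1 i j hij]
    · rw [Matrix.add_mul, Matrix.mul_add, ha.2, hb.2]
  zero_mem' := ⟨fun i j _ => rfl, by simp⟩
  smul_mem' := by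
    intro c A hA
    refine ⟨fun i j hij => ?_, ?_⟩
    · simp [Matrix.smul_apply, hA.1 i j hij]
    · rw [Matrix.smul_mul, Matrix.mul_smul, hA.2]

open Finset
open scoped Classical

theorem Submodule.finrank_eq_card_of_restrict_bijective {K m n : Type*} [Field K]
    (W : Submodule K (Matrix m n K)) (S : m × n → Prop) [Fintype {q // S q}]
    (hinj : ∀ A ∈ W, (∀ q, S q → A q.1 q.2 = 0) → A = 0)
    (hsurj : ∀ c : {q // S q} → K, ∃ A ∈ W, ∀ q : {q // S q}, A q.1.1 q.1.2 = c q) :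
    Module.finrank K W = Fintype.card {q // S q} := by
  let restrict : W →ₗ[K] {q // S q} → K :=
    { toFun := fun A q => A.1 q.1.1 q.1.2
      map_add' := fun _ _ => rfl
      map_smul' := fun _ _ => rfl }
  have bij : Function.Bijective restrict := by
    refine ⟨(injective_iff_map_eq_zero restrict).2 fun A hA => ?_, fun c => ?_⟩
    · exact Subtype.ext (hinj A A.2 fun q hq => congrFun hA ⟨q, hq⟩)
    · obtain ⟨A, hA, hc⟩ := hsurj c
      exact ⟨⟨A, hA⟩, funext hc⟩
  rw [(LinearEquiv.ofBijective restrict bij).finrank_eq, Module.finrank_pi]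

theorem Finset.card_filter_prod_eq_sum {α γ : Type*} [Fintype α] [Fintype γ] [DecidableEq γ]
    (P Q : α → Prop) [DecidablePred P] [DecidablePred Q] (φ : α → γ)
    (R : γ → γ → Prop) [DecidableRel R] :
    #{q : α × α | P q.1 ∧ Q q.2 ∧ R (φ q.1) (φ q.2)} =
      ∑ c, ∑ d, if R c d then #{a | P a ∧ φ a = c} * #{a | Q a ∧ φ a = d} else 0 := by
  have fiber (S : α → Prop) [DecidablePred S] (F : γ → ℕ) :
      ∑ a, (if S a then F (φ a) else 0) = ∑ c, #{a | S a ∧ φ a = c} * F c := by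
    rw [← sum_filter, ← sum_fiberwise' _ φ]
    simp only [sum_const, filter_filter, smul_eq_mul]
  rw [card_filter, ← univ_product_univ, sum_product]
  calc ∑ a, ∑ b, (if P a ∧ Q b ∧ R (φ a) (φ b) then 1 else 0)
      = ∑ a, if P a then ∑ b, (if Q b then (if R (φ a) (φ b) then 1 else 0) else 0) else 0 := by
        simp only [ite_and, sum_ite_irrel, sum_const_zero]
    _ = ∑ a, if P a then ∑ d, (if R (φ a) d then #{b | Q b ∧ φ b = d} else 0) else 0 :=
        sum_congr rfl fun a _ => by
          simp only [fiber Q fun d => if R (φ a) d then 1 else 0, mul_boole]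
    _ = _ := by
        rw [fiber P fun c => ∑ d, if R c d then #{b | Q b ∧ φ b = d} else 0]
        simp only [mul_sum, mul_ite, mul_zero]

theorem Finset.sum_sum_ite_le_mul {ι R : Type*} [Fintype ι] [Preorder ι] [DecidableLE ι]
    [CommSemiring R] (X Y : ι → R) :
    ∑ c, ∑ d, (if c ≤ d then X c * Y d else 0) = ∑ d, Y d * ∑ c, if c ≤ d then X c else 0 := by
  rw [sum_comm]
  simp [mul_sum, mul_ite, mul_comm]

namespace Matrix

variable {ι R : Type*} [Semiring R]

def IsTarget (N : Matrix ι ι R) (u : ι) : Prop := ∃ v, N u v ≠ 0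

def IsSource (N : Matrix ι ι R) (v : ι) : Prop := ∃ u, N u v ≠ 0

noncomputable def source (N : Matrix ι ι R) (u : ι) : ι :=
  if h : N.IsTarget u then h.choose else u

noncomputable def target (N : Matrix ι ι R) (v : ι) : ι :=
  if h : N.IsSource v then h.choose else v

noncomputable def pairRep (N : Matrix ι ι R) (q : ι × ι) : ι × ι :=
  if N.IsSource q.1 ∧ N.IsSource q.2 then (N.target q.1, N.target q.2) else q

variable {N : Matrix ι ι R} {u v : ι}

theorem apply_source_ne_zero (h : N.IsTarget u) : N u (N.source u) ≠ 0 := by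
  rw [source, dif_pos h]
  exact h.choose_spec

theorem apply_target_ne_zero (h : N.IsSource v) : N (N.target v) v ≠ 0 := by
  rw [target, dif_pos h]
  exact h.choose_spec

theorem isSource_source (h : N.IsTarget u) : N.IsSource (N.source u) :=
  ⟨u, apply_source_ne_zero h⟩

theorem isTarget_target (h : N.IsSource v) : N.IsTarget (N.target v) :=
  ⟨v, apply_target_ne_zero h⟩

variable [Fintype ι]

/-- The normal form of a 2-nilpotent matrix: the oriented link pattern with an arrow `v ↦ u`
for every entry `N u v = 1`. -/
structure IsLinkPattern (N : Matrix ι ι R) : Prop where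
  zero_or_one : ∀ i j, N i j = 0 ∨ N i j = 1
  eq_of_ne_zero_of_ne_zero_row : ∀ i j j', N i j ≠ 0 → N i j' ≠ 0 → j = j'
  eq_of_ne_zero_of_ne_zero_col : ∀ i i' j, N i j ≠ 0 → N i' j ≠ 0 → i = i'
  mul_self_eq_zero : N * N = 0

namespace IsLinkPattern

variable (hN : N.IsLinkPattern)
include hN

theorem source_eq (h : N u v ≠ 0) : N.source u = v :=
  hN.eq_of_ne_zero_of_ne_zero_row u _ v (apply_source_ne_zero ⟨v, h⟩) h

theorem target_eq (h : N u v ≠ 0) : N.target v = u :=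
  hN.eq_of_ne_zero_of_ne_zero_col _ u v (apply_target_ne_zero ⟨u, h⟩) h

theorem target_source (h : N.IsTarget u) : N.target (N.source u) = u :=
  hN.target_eq (apply_source_ne_zero h)

theorem source_target (h : N.IsSource v) : N.source (N.target v) = v :=
  hN.source_eq (apply_target_ne_zero h)

theorem not_isSource_of_isTarget (h : N.IsTarget u) : ¬N.IsSource u := by
  rintro ⟨w, hw⟩
  obtain ⟨v, hv⟩ := h
  have hwv : (N * N) w v = N w u * N u v := by
    rw [mul_apply, sum_eq_single u]
    · intro k _ hk
      by_contra hne
      exact hk (hN.eq_of_ne_zero_of_ne_zero_row w k u (left_ne_zero_of_mul hne) hw)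
    · simp
  have hw1 := (hN.zero_or_one w u).resolve_left hw
  rw [hN.mul_self_eq_zero, hw1, (hN.zero_or_one u v).resolve_left hv, mul_one] at hwv
  exact hw (hw1.trans hwv.symm)

theorem matrix_mul_apply (A : Matrix ι ι R) (u v : ι) :
    (A * N) u v = if N.IsSource v then A u (N.target v) else 0 := by
  rw [mul_apply]
  split_ifs with h
  · rw [sum_eq_single (N.target v), (hN.zero_or_one _ v).resolve_left (apply_target_ne_zero h),
      mul_one]
    · intro k _ hk
      by_contra hne
      exact hk (hN.target_eq (right_ne_zero_of_mul hne)).symm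
    · simp
  · refine sum_eq_zero fun k _ => ?_
    rw [not_not.mp (not_exists.mp h k), mul_zero]

theorem mul_matrix_apply (A : Matrix ι ι R) (u v : ι) :
    (N * A) u v = if N.IsTarget u then A (N.source u) v else 0 := by
  rw [mul_apply]
  split_ifs with h
  · rw [sum_eq_single (N.source u), (hN.zero_or_one u _).resolve_left (apply_source_ne_zero h),
      one_mul]
    · intro k _ hk
      by_contra hne
      exact hk (hN.source_eq (left_ne_zero_of_mul hne)).symm
    · simp
  · refine sum_eq_zero fun k _ => ?_
    rw [not_not.mp (not_exists.mp h k), zero_mul]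

theorem commute_iff (A : Matrix ι ι R) :
    A * N = N * A ↔
      (∀ u v, N.IsTarget v → ¬N.IsTarget u → A u v = 0) ∧
      (∀ u v, N.IsSource u → ¬N.IsSource v → A u v = 0) ∧
      (∀ u v, N.IsTarget u → N.IsTarget v → A u v = A (N.source u) (N.source v)) := by
  constructor
  · intro hA
    have key (u v : ι) : (if N.IsSource v then A u (N.target v) else 0) =
        if N.IsTarget u then A (N.source u) v else 0 := by
      rw [← hN.matrix_mul_apply, ← hN.mul_matrix_apply, hA]
    refine ⟨fun u v hv hu => ?_, fun u v hu hv => ?_, fun u v hu hv => ?_⟩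
    · simpa [isSource_source hv, hN.target_source hv, hu] using key u (N.source v)
    · simpa [hv, isTarget_target hu, hN.source_target hu] using (key (N.target u) v).symm
    · simpa [isSource_source hv, hN.target_source hv, hu] using key u (N.source v)
  · rintro ⟨hzero_tgt, hzero_src, hsource⟩
    ext u v
    rw [hN.matrix_mul_apply, hN.mul_matrix_apply]
    by_cases hv : N.IsSource v <;> by_cases hu : N.IsTarget u <;>
      simp only [hv, hu, if_true, if_false]
    · rw [hsource u _ hu (isTarget_target hv), hN.source_target hv]
    · exact hzero_tgt u _ (isTarget_target hv) hu
    · exact (hzero_src _ v (isSource_source hu) hv).symm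

theorem apply_pairRep {A : Matrix ι ι R} (hA : A * N = N * A) (q : ι × ι) :
    A (N.pairRep q).1 (N.pairRep q).2 = A q.1 q.2 := by
  unfold pairRep
  split_ifs with h
  · rw [((hN.commute_iff A).mp hA).2.2 _ _ (isTarget_target h.1) (isTarget_target h.2),
      hN.source_target h.1, hN.source_target h.2]
  · rfl

theorem not_isSource_and_isSource_pairRep (q : ι × ι) :
    ¬(N.IsSource (N.pairRep q).1 ∧ N.IsSource (N.pairRep q).2) := by
  unfold pairRep
  split_ifs with h
  · exact fun h' => hN.not_isSource_of_isTarget (isTarget_target h.1) h'.1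
  · exact h

theorem pairRep_source_source (hu : N.IsTarget u) (hv : N.IsTarget v) :
    N.pairRep (N.source u, N.source v) = (u, v) := by
  rw [pairRep, if_pos ⟨isSource_source hu, isSource_source hv⟩, hN.target_source hu,
    hN.target_source hv]

end IsLinkPattern

end Matrix

open Matrix

def IsFreePair {ι κ R : Type*} [Semiring R] [Preorder κ] (β : ι → κ) (N : Matrix ι ι R)
    (q : ι × ι) : Prop :=
  (¬N.IsSource q.1 ∧ ¬N.IsTarget q.2 ∧ β q.1 ≤ β q.2) ∨
    (N.IsTarget q.1 ∧ N.IsTarget q.2 ∧ (β q.1, β (N.source q.1)) ≤ (β q.2, β (N.source q.2)))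

noncomputable def extendFree {n p : ℕ} (β : Fin n → Fin p) (N : Matrix (Fin n) (Fin n) ℂ)
    (c : {q // IsFreePair β N q} → ℂ) : Matrix (Fin n) (Fin n) ℂ :=
  fun u v => if h : IsFreePair β N (N.pairRep (u, v)) then c ⟨_, h⟩ else 0

namespace Matrix.IsLinkPattern

variable {n p : ℕ} {β : Fin n → Fin p} {N : Matrix (Fin n) (Fin n) ℂ} (hN : N.IsLinkPattern)
include hN

theorem pairRep_eq_self_of_isFreePair {q : Fin n × Fin n} (hq : IsFreePair β N q) :
    N.pairRep q = q := by
  refine if_neg fun h => ?_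
  rcases hq with ⟨hs, -⟩ | ⟨ht, -⟩
  · exact hs h.1
  · exact hN.not_isSource_of_isTarget ht h.1

theorem apply_eq_zero_of_not_isFreePair {A : Matrix (Fin n) (Fin n) ℂ} {u v : Fin n}
    (hA : A ∈ stabAlg β N)
    (hsrc : ¬(N.IsSource u ∧ N.IsSource v)) (hfree : ¬IsFreePair β N (u, v)) : A u v = 0 := by
  obtain ⟨htri, hcomm⟩ := hA
  obtain ⟨hzero_tgt, hzero_src, hsource⟩ := (hN.commute_iff A).mp hcomm
  by_cases hle : β u ≤ β v
  swap
  · exact htri u v (lt_of_not_ge hle)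
  by_cases hu : N.IsSource u
  · exact hzero_src u v hu fun hv => hsrc ⟨hu, hv⟩
  by_cases hv : N.IsTarget v
  swap
  · exact absurd (Or.inl ⟨hu, hv, hle⟩) hfree
  by_cases hu' : N.IsTarget u
  swap
  · exact hzero_tgt u v hv hu'
  rw [hsource u v hu' hv]
  exact htri _ _ (lt_of_not_ge fun hle' => hfree (Or.inr ⟨hu', hv, Prod.mk_le_mk.2 ⟨hle, hle'⟩⟩))

theorem le_of_isFreePair_pairRep {u v : Fin n} (h : IsFreePair β N (N.pairRep (u, v))) :
    β u ≤ β v := by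
  unfold pairRep at h
  split_ifs at h with hs
  · rcases h with ⟨-, hnt, -⟩ | ⟨-, -, hle⟩
    · exact absurd (isTarget_target hs.2) hnt
    · rw [hN.source_target hs.1, hN.source_target hs.2] at hle
      exact (Prod.mk_le_mk.1 hle).2
  · rcases h with ⟨-, -, hle⟩ | ⟨-, -, hle⟩
    · exact hle
    · exact (Prod.mk_le_mk.1 hle).1

theorem extendFree_mem_stabAlg (c : {q // IsFreePair β N q} → ℂ) :
    extendFree β N c ∈ stabAlg β N := by
  have zero_of {u v : Fin n} (h : ¬IsFreePair β N (N.pairRep (u, v))) :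
      extendFree β N c u v = 0 :=
    dif_neg h
  refine ⟨fun u v hlt => zero_of ?_, (hN.commute_iff _).mpr ⟨?_, ?_, ?_⟩⟩
  · exact fun h => hlt.not_ge (hN.le_of_isFreePair_pairRep h)
  · intro u v hv hu
    apply zero_of
    rw [pairRep, if_neg fun h => hN.not_isSource_of_isTarget hv h.2]
    rintro (⟨-, hv', -⟩ | ⟨hu', -⟩)
    · exact hv' hv
    · exact hu hu'
  · intro u v hu hv
    apply zero_of
    rw [pairRep, if_neg fun h => hv h.2]
    rintro (⟨hu', -⟩ | ⟨hu', -⟩)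
    · exact hu' hu
    · exact hN.not_isSource_of_isTarget hu' hu
  · intro u v hu hv
    simp only [extendFree, hN.pairRep_source_source hu hv]
    rw [pairRep, if_neg fun h => hN.not_isSource_of_isTarget hu h.1]

theorem extendFree_apply_of_isFreePair (c : {q // IsFreePair β N q} → ℂ)
    (q : {q // IsFreePair β N q}) : extendFree β N c q.1.1 q.1.2 = c q := by
  have hrep : N.pairRep q.1 = q.1 := hN.pairRep_eq_self_of_isFreePair q.2
  simp only [extendFree, Prod.mk.eta, hrep, dif_pos q.2]

theorem finrank_stabAlg :
    Module.finrank ℂ (stabAlg β N) = Fintype.card {q // IsFreePair β N q} := by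
  refine Submodule.finrank_eq_card_of_restrict_bijective _ _ (fun A hA h0 => ?_) fun c => ?_
  · ext u v
    rw [zero_apply, ← hN.apply_pairRep hA.2 (u, v)]
    by_cases hfree : IsFreePair β N (N.pairRep (u, v))
    · exact h0 _ hfree
    · exact hN.apply_eq_zero_of_not_isFreePair hA (hN.not_isSource_and_isSource_pairRep _) hfree
  · exact ⟨extendFree β N c, hN.extendFree_mem_stabAlg c, hN.extendFree_apply_of_isFreePair c⟩

end Matrix.IsLinkPattern

theorem finrank_pAlg {n p : ℕ} (β : Fin n → Fin p) :
    Module.finrank ℂ (pAlg β) =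
      ∑ c, ∑ d, if c ≤ d then #{u | β u = c} * #{u | β u = d} else 0 := by
  have hcard := card_filter_prod_eq_sum (fun _ => True) (fun _ => True) β (· ≤ ·)
  simp only [true_and] at hcard
  rw [← hcard, ← Fintype.card_subtype]
  refine Submodule.finrank_eq_card_of_restrict_bijective _ _ (fun A hA h0 => ?_) fun c => ?_
  · ext u v
    by_cases h : β u ≤ β v
    · exact h0 (u, v) h
    · exact hA u v (lt_of_not_ge h)
  · refine ⟨fun u v => if h : β u ≤ β v then c ⟨(u, v), h⟩ else 0,
      fun u v h => dif_neg h.not_ge, fun q => dif_pos q.2⟩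

theorem card_isFreePair {ι κ R : Type*} [Fintype ι] [Fintype κ] [DecidableEq κ] [Preorder κ]
    [Semiring R] (β : ι → κ) (N : Matrix ι ι R) :
    Fintype.card {q // IsFreePair β N q} =
      (∑ c, ∑ d, if c ≤ d then
          #{u | ¬N.IsSource u ∧ β u = c} * #{v | ¬N.IsTarget v ∧ β v = d} else 0) +
        ∑ c : κ × κ, ∑ d, if c ≤ d then
          #{u | N.IsTarget u ∧ (β u, β (N.source u)) = c} *
            #{v | N.IsTarget v ∧ (β v, β (N.source v)) = d} else 0 := by
  rw [Fintype.card_subtype, ← card_filter_prod_eq_sum, ← card_filter_prod_eq_sum,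
    ← card_union_of_disjoint (disjoint_filter.2 fun q _ h1 h2 => h1.2.1 h2.2.1), ← filter_or]
  congr 1
  ext q
  simp [IsFreePair]

noncomputable def arrowCount {ι κ R : Type*} [Fintype ι] [DecidableEq κ] [Semiring R]
    (β : ι → κ) (N : Matrix ι ι R) (k l : κ) : ℕ :=
  #{q : ι × ι | N q.1 q.2 ≠ 0 ∧ β q.1 = k ∧ β q.2 = l}

namespace Matrix.IsLinkPattern

variable {ι κ R : Type*} [Fintype ι] [Semiring R] {N : Matrix ι ι R} (hN : N.IsLinkPattern)
include hN

theorem card_isTarget_filter (P : ι → ι → Prop) [∀ u w, Decidable (P u w)] :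
    #{u | N.IsTarget u ∧ P u (N.source u)} = #{q : ι × ι | N q.1 q.2 ≠ 0 ∧ P q.1 q.2} := by
  refine card_nbij' (fun u => (u, N.source u)) Prod.fst ?_ ?_ (fun _ _ => rfl) ?_
  · intro u hu
    simp only [coe_filter, mem_univ, true_and, Set.mem_ofPred_eq] at hu ⊢
    exact ⟨apply_source_ne_zero hu.1, hu.2⟩
  · rintro q hq
    simp only [coe_filter, mem_univ, true_and, Set.mem_ofPred_eq] at hq ⊢
    exact ⟨⟨q.2, hq.1⟩, hN.source_eq hq.1 ▸ hq.2⟩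
  · rintro q hq
    simp only [coe_filter, mem_univ, true_and, Set.mem_ofPred_eq] at hq
    exact Prod.ext rfl (hN.source_eq hq.1)

theorem card_isSource_filter (P : ι → ι → Prop) [∀ u w, Decidable (P u w)] :
    #{v | N.IsSource v ∧ P (N.target v) v} = #{q : ι × ι | N q.1 q.2 ≠ 0 ∧ P q.1 q.2} := by
  refine card_nbij' (fun v => (N.target v, v)) Prod.snd ?_ ?_ (fun _ _ => rfl) ?_
  · intro v hv
    simp only [coe_filter, mem_univ, true_and, Set.mem_ofPred_eq] at hv ⊢
    exact ⟨apply_target_ne_zero hv.1, hv.2⟩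
  · rintro q hq
    simp only [coe_filter, mem_univ, true_and, Set.mem_ofPred_eq] at hq ⊢
    exact ⟨⟨q.1, hq.1⟩, hN.target_eq hq.1 ▸ hq.2⟩
  · rintro q hq
    simp only [coe_filter, mem_univ, true_and, Set.mem_ofPred_eq] at hq
    exact Prod.ext (hN.target_eq hq.1) rfl

theorem card_isTarget_fiber [DecidableEq κ] (β : ι → κ) (c : κ × κ) :
    #{u | N.IsTarget u ∧ (β u, β (N.source u)) = c} = arrowCount β N c.1 c.2 := by
  rw [hN.card_isTarget_filter fun u w => (β u, β w) = c, arrowCount]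
  simp only [Prod.ext_iff]

theorem card_isSource_fiber [Fintype κ] [DecidableEq κ] (β : ι → κ) (l : κ) :
    #{v | N.IsSource v ∧ β v = l} = ∑ k, arrowCount β N k l := by
  rw [hN.card_isSource_filter fun _ v => β v = l,
    card_eq_sum_card_fiberwise (f := fun q => β q.1) fun _ _ => mem_univ _]
  simp only [arrowCount, filter_filter, and_assoc, and_comm]

theorem card_isTarget_fiber_fst [Fintype κ] [DecidableEq κ] (β : ι → κ) (k : κ) :
    #{u | N.IsTarget u ∧ β u = k} = ∑ l, arrowCount β N k l := by
  rw [hN.card_isTarget_filter fun u _ => β u = k,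
    card_eq_sum_card_fiberwise (f := fun q => β q.2) fun _ _ => mem_univ _]
  simp only [arrowCount, filter_filter, and_assoc]

theorem card_not_isSource_fiber [Fintype κ] [DecidableEq κ] (β : ι → κ) (d : κ → ℕ)
    (hd : ∀ k, d k + ∑ j, (arrowCount β N k j + arrowCount β N j k) = #{u | β u = k})
    (k : κ) : #{u | ¬N.IsSource u ∧ β u = k} = d k + ∑ l, arrowCount β N k l := by
  have hsplit := card_filter_add_card_filter_not (s := {u | β u = k}) N.IsSource
  simp only [filter_filter, and_comm (a := β _ = k)] at hsplit
  have hdk := hd k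
  rw [hN.card_isSource_fiber] at hsplit
  rw [sum_add_distrib] at hdk
  omega

theorem card_not_isTarget_fiber [Fintype κ] [DecidableEq κ] (β : ι → κ) (d : κ → ℕ)
    (hd : ∀ k, d k + ∑ j, (arrowCount β N k j + arrowCount β N j k) = #{u | β u = k})
    (k : κ) : #{u | ¬N.IsTarget u ∧ β u = k} = d k + ∑ l, arrowCount β N l k := by
  have hsplit := card_filter_add_card_filter_not (s := {u | β u = k}) N.IsTarget
  simp only [filter_filter, and_comm (a := β _ = k)] at hsplit
  have hdk := hd k
  rw [hN.card_isTarget_fiber_fst] at hsplit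
  rw [sum_add_distrib] at hdk
  omega

end Matrix.IsLinkPattern

theorem orbit_dimension_identity {ι : Type*} [Fintype ι] [Preorder ι] [DecidableLE ι]
    (B D : ι → ℤ) (M : ι → ι → ℤ) :
    (∑ c, ∑ d, if c ≤ d then B c * B d else 0) -
        ((∑ c, ∑ d, if c ≤ d then (D c + ∑ l, M c l) * (D d + ∑ l, M l d) else 0) +
          ∑ c : ι × ι, ∑ d, if c ≤ d then M c.1 c.2 * M d.1 d.2 else 0) =
      (∑ i, ∑ x, if x ≤ i then B i * B x else 0) -
        (∑ i, ∑ j, M i j * ((∑ i', if i' ≤ j then D i' + ∑ j', M i' j' else 0) +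
          ∑ i', ∑ j', if j' ≤ j ∧ i' ≤ i then M i' j' else 0)) -
        ∑ i, D i * ∑ i', if i' ≤ i then D i' + ∑ j', M i' j' else 0 := by
  set a : ι → ℤ := fun k => ∑ i', if i' ≤ k then D i' + ∑ j', M i' j' else 0
  have hB : (∑ c, ∑ d, if c ≤ d then B c * B d else 0) =
      ∑ i, ∑ x, if x ≤ i then B i * B x else 0 := by
    rw [sum_comm]
    exact sum_congr rfl fun i _ => sum_congr rfl fun x _ => by rw [mul_comm]
  have hD : (∑ c, ∑ d, if c ≤ d then (D c + ∑ l, M c l) * (D d + ∑ l, M l d) else 0) =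
      ∑ i, D i * a i + ∑ i, ∑ j, M i j * a j := by
    rw [sum_sum_ite_le_mul, sum_comm (f := fun i j => M i j * a j)]
    simp only [add_mul, sum_add_distrib, sum_mul, a]
  have hM : (∑ c : ι × ι, ∑ d, if c ≤ d then M c.1 c.2 * M d.1 d.2 else 0) =
      ∑ i, ∑ j, M i j * ∑ i', ∑ j', if j' ≤ j ∧ i' ≤ i then M i' j' else 0 := by
    rw [sum_sum_ite_le_mul (fun c : ι × ι => M c.1 c.2) (fun d : ι × ι => M d.1 d.2),
      Fintype.sum_prod_type]
    simp only [Fintype.sum_prod_type, Prod.mk_le_mk, and_comm]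
  rw [hB, hD, hM]
  simp only [mul_add, sum_add_distrib]
  ring
/-- `m i j` counts the arrows of the link pattern of `N` from block `j` to block `i` (the
multiplicity of `U_{i,j}`), `nm i` the dots in block `i` (the multiplicity of `V_i`); `afun` and
`bfun` are `a_k(M)` and `b_{k,l}(M)` expanded through the hom-dimension formulas. -/
theorem parabolic_orbit_dimension_general (n p : ℕ) (b : Fin p → ℕ) (β : Fin n → Fin p)
    (hb : ∀ k, (Finset.univ.filter fun x => β x = k).card = b k)
    (N : Matrix (Fin n) (Fin n) ℂ) (hsq : N ^ 2 = 0)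
    (h01 : ∀ i j, N i j = 0 ∨ N i j = 1)
    (hrow : ∀ i j j', N i j ≠ 0 → N i j' ≠ 0 → j = j')
    (hcol : ∀ i i' j, N i j ≠ 0 → N i' j ≠ 0 → i = i')
    (m : Fin p → Fin p → ℕ)
    (hm : ∀ i j, m i j =
      Set.ncard {q : Fin n × Fin n | N q.1 q.2 ≠ 0 ∧ β q.1 = i ∧ β q.2 = j})
    (nm : Fin p → ℕ)
    (hnm : ∀ i, nm i + (∑ j, (m i j + m j i)) = b i) :
    let afun : Fin p → ℤ := fun k =>
      ∑ i' : Fin p, if i' ≤ k then ((nm i' : ℤ) + ∑ j' : Fin p, (m i' j' : ℤ)) else 0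
    let bfun : Fin p → Fin p → ℤ := fun k l =>
      afun l + ∑ i' : Fin p, ∑ j' : Fin p, if j' ≤ l ∧ i' ≤ k then (m i' j' : ℤ) else 0
    (Module.finrank ℂ (pAlg β) : ℤ) - (Module.finrank ℂ (stabAlg β N) : ℤ) =
      (∑ i : Fin p, ∑ x : Fin p, if x ≤ i then ((b i : ℤ) * (b x : ℤ)) else 0) -
        (∑ i : Fin p, ∑ j : Fin p, (m i j : ℤ) * bfun i j) -
        (∑ i : Fin p, (nm i : ℤ) * afun i) := by
  intro afun bfun
  have hN : N.IsLinkPattern := ⟨h01, hrow, hcol, sq N ▸ hsq⟩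
  obtain rfl : m = arrowCount β N := funext₂ fun i j => by
    rw [hm, arrowCount, ← Set.ncard_coe_finset]
    simp
  have hdot k : nm k + ∑ j, (arrowCount β N k j + arrowCount β N j k) = #{u | β u = k} :=
    (hnm k).trans (hb k).symm
  rw [finrank_pAlg, hN.finrank_stabAlg, card_isFreePair]
  simp only [hb, hN.card_not_isSource_fiber β nm hdot, hN.card_not_isTarget_fiber β nm hdot,
    hN.card_isTarget_fiber]
  push_cast
  exact orbit_dimension_identity (fun k => (b k : ℤ)) (fun k => (nm k : ℤ))
    fun i j => (arrowCount β N i j : ℤ)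

/-- Dimension formula for the parabolic orbit of a 2-nilpotent matrix `N`
in normal form.  Here `m i j` is the multiplicity of the indecomposable
`U_{i,j}` (the number of arrows of the enhanced oriented link pattern of `N`
from block `j` to block `i`), `nm i` the multiplicity of `V_i` (dots in
block `i`), and `a_k(M) = dim Hom(V_k, M)`, `b_{k,l}(M) = dim Hom(U_{k,l}, M)`
are expanded via `dim Hom(V_k,V_i) = dim Hom(V_k,U_{i,j}) = δ_{i≤k}`,
`dim Hom(U_{k,l},V_i) = δ_{i≤l}`, `dim Hom(U_{k,l},U_{i,j}) = δ_{i≤l} +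
δ_{j≤l}·δ_{i≤k}`.  The orbit dimension `dim P − dim Stab_P(N)` equals
`Σ_{i} Σ_{x≤i} b_i b_x − Σ_{i,j} m_{i,j} b_{i,j}(M) − Σ_i n_i a_i(M)`. -/
theorem parabolic_orbit_dimension (n p : ℕ) (b : Fin p → ℕ) (β : Fin n → Fin p)
    (hmono : Monotone β)
    (hb : ∀ k, (Finset.univ.filter fun x => β x = k).card = b k)
    (N : Matrix (Fin n) (Fin n) ℂ) (hsq : N ^ 2 = 0)
    (h01 : ∀ i j, N i j = 0 ∨ N i j = 1)
    (hrow : ∀ i j j', N i j ≠ 0 → N i j' ≠ 0 → j = j')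
    (hcol : ∀ i i' j, N i j ≠ 0 → N i' j ≠ 0 → i = i')
    (m : Fin p → Fin p → ℕ)
    (hm : ∀ i j, m i j =
      Set.ncard {q : Fin n × Fin n | N q.1 q.2 ≠ 0 ∧ β q.1 = i ∧ β q.2 = j})
    (nm : Fin p → ℕ)
    (hnm : ∀ i, nm i + (∑ j, (m i j + m j i)) = b i) :
    let afun : Fin p → ℤ := fun k =>
      ∑ i' : Fin p, if i' ≤ k then ((nm i' : ℤ) + ∑ j' : Fin p, (m i' j' : ℤ)) else 0
    let bfun : Fin p → Fin p → ℤ := fun k l =>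
      afun l + ∑ i' : Fin p, ∑ j' : Fin p, if j' ≤ l ∧ i' ≤ k then (m i' j' : ℤ) else 0
    (Module.finrank ℂ (pAlg β) : ℤ) - (Module.finrank ℂ (stabAlg β N) : ℤ) =
      (∑ i : Fin p, ∑ x : Fin p, if x ≤ i then ((b i : ℤ) * (b x : ℤ)) else 0) -
        (∑ i : Fin p, ∑ j : Fin p, (m i j : ℤ) * bfun i j) -
        (∑ i : Fin p, (nm i : ℤ) * afun i) :=
  parabolic_orbit_dimension_general n p b β hb N hsq h01 hrow hcol m hm nm hnm
end
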